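/- arXiv:math/0109164 — 2 statements merged into one kernel-verified Lean document; each statement's English description precedes it below -/
import Mathlib

section
/- In B_6, the element δ_4^2 belongs to N(ρ_{{5}}^6), where ρ_{{5}}^6 = ((1 2),(1 2),(2 3),(2 3),(2 3),(1 4)); that is, δ_4 is equivalent to δ_4^{-1} modulo the colored-braid moves for this coloring. -/
open Equiv MulOpposite

namespace ApostolakisMoves

variable {G : Type*} [Group G]

/-- The `i`-th Hurwitz move on sequences of group elements. -/
def hFun (i : ℕ) (f : ℕ → G) : ℕ → G := fun j =>
  if j = i then f i * f (i + 1) * (f i)⁻¹ else if j = i + 1 then f i else f j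

/-- The inverse of the `i`-th Hurwitz move. -/
def hInv (i : ℕ) (f : ℕ → G) : ℕ → G := fun j =>
  if j = i then f (i + 1) else if j = i + 1 then (f (i + 1))⁻¹ * f i * f (i + 1) else f j

/-- The `i`-th Hurwitz move as a permutation of sequences of group elements. -/
def hGen (G : Type*) [Group G] (i : ℕ) : Equiv.Perm (ℕ → G) where
  toFun := hFun i
  invFun := hInv i
  left_inv := by
    intro f
    funext j
    have h1 : i + 1 ≠ i := by omega
    by_cases hj : j = i
    · subst hj; simp [hFun, hInv, h1]
    · by_cases hj' : j = i + 1
      · subst hj'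
        simp only [hFun, hInv, h1, if_neg, if_pos, eq_self_iff_true, if_true, if_false]
        group
      · simp [hFun, hInv, hj, hj']
  right_inv := by
    intro f
    funext j
    have h1 : i + 1 ≠ i := by omega
    by_cases hj : j = i
    · subst hj
      simp only [hFun, hInv, h1, if_neg, if_pos, eq_self_iff_true, if_true, if_false]
      group
    · by_cases hj' : j = i + 1
      · subst hj'; simp [hFun, hInv, h1]
      · simp [hFun, hInv, hj, hj']

@[simp] lemma hGen_apply (i : ℕ) (f : ℕ → G) : hGen G i f = hFun i f := rfl

lemma braid_rel (G : Type*) [Group G] (i : ℕ) :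
    hGen G i * hGen G (i + 1) * hGen G i = hGen G (i + 1) * hGen G i * hGen G (i + 1) := by
  apply Equiv.ext
  intro f
  funext k
  simp only [Equiv.Perm.mul_apply, hGen_apply, hFun]
  split_ifs <;> first | omega | group

lemma comm_rel (G : Type*) [Group G] {i j : ℕ} (h : i + 2 ≤ j) :
    hGen G i * hGen G j = hGen G j * hGen G i := by
  apply Equiv.ext
  intro f
  funext k
  simp only [Equiv.Perm.mul_apply, hGen_apply, hFun]
  split_ifs <;> first | rfl | omega

/-- The braid relations, as a set of elements of the free group on `n - 1` generators. -/
def braidRels (n : ℕ) : Set (FreeGroup (Fin (n - 1))) :=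
  {r | ∃ i j : Fin (n - 1),
    ((i : ℕ) + 1 = (j : ℕ) ∧
      r = .of i * .of j * .of i * (.of j * .of i * .of j)⁻¹) ∨
    ((i : ℕ) + 2 ≤ (j : ℕ) ∧ r = .of i * .of j * (.of j * .of i)⁻¹)}

/-- The braid group on `n` strands, presented by the generators `β_0, …, β_{n-2}` subject to
the braid relations. -/
abbrev BraidGroup (n : ℕ) := PresentedGroup (braidRels n)

/-- The standard generator `β_i` of the braid group on `n` strands (equal to `1` if `i` is
out of range). -/
def braidGen (n i : ℕ) : BraidGroup n :=
  if h : i < n - 1 then PresentedGroup.of ⟨i, h⟩ else 1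

/-- The Hurwitz (right) action of the braid group, as a homomorphism into the opposite of the
permutation group of sequences. -/
def braidActHom (n : ℕ) (G : Type*) [Group G] : BraidGroup n →* (Equiv.Perm (ℕ → G))ᵐᵒᵖ :=
  PresentedGroup.toGroup (f := fun i : Fin (n - 1) => op (hGen G (i : ℕ))) (by
    rintro r ⟨i, j, ⟨hij, rfl⟩ | ⟨hij, rfl⟩⟩
    · have key : hGen G (i : ℕ) * hGen G (j : ℕ) * hGen G (i : ℕ)
          = hGen G (j : ℕ) * hGen G (i : ℕ) * hGen G (j : ℕ) := by
        rw [← hij]; exact braid_rel G i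
      simp only [map_mul, map_inv, FreeGroup.lift_apply_of]
      rw [mul_inv_eq_one]
      simp only [← op_mul]
      exact congrArg op (by rw [← mul_assoc, ← mul_assoc, key])
    · have key : hGen G (i : ℕ) * hGen G (j : ℕ) = hGen G (j : ℕ) * hGen G (i : ℕ) :=
        comm_rel G hij
      simp only [map_mul, map_inv, FreeGroup.lift_apply_of]
      rw [mul_inv_eq_one]
      simp only [← op_mul]
      exact congrArg op key.symm)

/-- The Hurwitz right action: `ρ · β`. -/
def act {n : ℕ} {G : Type*} [Group G] (ρ : ℕ → G) (β : BraidGroup n) : ℕ → G :=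
  (braidActHom n G β).unop ρ

lemma act_one {n : ℕ} (ρ : ℕ → G) : act ρ (1 : BraidGroup n) = ρ := by
  simp [act]

lemma act_mul {n : ℕ} (ρ : ℕ → G) (a b : BraidGroup n) :
    act ρ (a * b) = act (act ρ a) b := by
  simp [act, map_mul]

/-- `Aut ρ`: the stabilizer of the sequence `ρ` under the Hurwitz action of the braid group. -/
def stab (n : ℕ) {G : Type*} [Group G] (ρ : ℕ → G) : Subgroup (BraidGroup n) where
  carrier := {β | act ρ β = ρ}
  one_mem' := act_one ρ
  mul_mem' := by
    intro a b ha hb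
    simp only [Set.mem_setOf_eq] at *
    rw [act_mul, ha, hb]
  inv_mem' := by
    intro a ha
    simp only [Set.mem_setOf_eq] at *
    have h := act_mul ρ a a⁻¹
    rw [mul_inv_cancel, act_one, ha] at h
    exact h.symm


/-- The transposition `(1 2)` of `S₄`. -/
def t12 : Equiv.Perm (Fin 4) := Equiv.swap 0 1
/-- The transposition `(1 3)` of `S₄`. -/
def t13 : Equiv.Perm (Fin 4) := Equiv.swap 0 2
/-- The transposition `(1 4)` of `S₄`. -/
def t14 : Equiv.Perm (Fin 4) := Equiv.swap 0 3
/-- The transposition `(2 3)` of `S₄`. -/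
def t23 : Equiv.Perm (Fin 4) := Equiv.swap 1 2
/-- The transposition `(1 2)` of `S₃`. -/
def s12 : Equiv.Perm (Fin 3) := Equiv.swap 0 1
/-- The transposition `(2 3)` of `S₃`. -/
def s23 : Equiv.Perm (Fin 3) := Equiv.swap 1 2

/-- The tuple `ρ_I^n` : `(1 2)` in positions `0` and `1`, `(1 4)` in the positions of `I`,
and `(2 3)` everywhere else (an `n`-tuple is encoded as a function `ℕ → S₄` whose values at
positions `≥ n` are the irrelevant constant `(2 3)`). -/
def rhoI (I : Finset ℕ) : ℕ → Equiv.Perm (Fin 4) := fun i =>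
  if i < 2 then t12 else if i ∈ I then t14 else t23

/-- The tuple `ρ̃_I^n` : `(1 2)` in positions `0` and `1`, `(2 3)` in the positions of `I`,
and `(1 4)` everywhere else. -/
def rhoTI (I : Finset ℕ) : ℕ → Equiv.Perm (Fin 4) := fun i =>
  if i < 2 then t12 else if i ∈ I then t23 else t14

/-- The tuple `ρ(n)` : `(1 2)` in positions `0` and `1` and `(2 3)` everywhere else. -/
def rho3 : ℕ → Equiv.Perm (Fin 3) := fun i => if i < 2 then s12 else s23

/-- `L(n) = Aut(ρ(n))`, the liftable braid subgroup. -/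
def Ln (n : ℕ) : Subgroup (BraidGroup n) := stab n rho3

/-- The braid `δ₄ = w⁻¹ β₄ w`, `w = β₃ β₂ β₁² β₂ β₃² β₂ β₁`. -/
def delta4 (n : ℕ) : BraidGroup n :=
  (braidGen n 3 * braidGen n 2 * (braidGen n 1) ^ 2 * braidGen n 2 * (braidGen n 3) ^ 2 *
      braidGen n 2 * braidGen n 1)⁻¹ *
    braidGen n 4 *
    (braidGen n 3 * braidGen n 2 * (braidGen n 1) ^ 2 * braidGen n 2 * (braidGen n 3) ^ 2 *
      braidGen n 2 * braidGen n 1)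

/-- The braid `δ₆ = v⁻¹ δ₄ v`, `v = β₅⁻¹ β₄⁻¹ β₃⁻¹ β₂⁻¹ β₆⁻¹ β₅⁻¹ β₄⁻¹ β₃⁻¹`. -/
def delta6 (n : ℕ) : BraidGroup n :=
  ((braidGen n 5)⁻¹ * (braidGen n 4)⁻¹ * (braidGen n 3)⁻¹ * (braidGen n 2)⁻¹ *
      (braidGen n 6)⁻¹ * (braidGen n 5)⁻¹ * (braidGen n 4)⁻¹ * (braidGen n 3)⁻¹)⁻¹ *
    delta4 n *
    ((braidGen n 5)⁻¹ * (braidGen n 4)⁻¹ * (braidGen n 3)⁻¹ * (braidGen n 2)⁻¹ *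
      (braidGen n 6)⁻¹ * (braidGen n 5)⁻¹ * (braidGen n 4)⁻¹ * (braidGen n 3)⁻¹)

/-- The generating set of the subgroup `N(ρ)` of colored-braid moves: conjugates `w β_i³ w⁻¹`
where the entries in positions `i, i+1` of `ρ · w` are distinct transpositions sharing exactly
one point of their supports (move `𝓜`), and conjugates `w β_i² w⁻¹` where those entries are
transpositions with disjoint supports (move `𝓟`). -/
def NSet (n : ℕ) {m : ℕ} (ρ : ℕ → Equiv.Perm (Fin m)) : Set (BraidGroup n) :=
  {x | ∃ w : BraidGroup n, ∃ i : ℕ, i < n - 1 ∧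
    ((x = w * (braidGen n i) ^ 3 * w⁻¹ ∧
        (act ρ w i).IsSwap ∧ (act ρ w (i + 1)).IsSwap ∧
        ((act ρ w i).support ∩ (act ρ w (i + 1)).support).card = 1) ∨
      (x = w * (braidGen n i) ^ 2 * w⁻¹ ∧
        (act ρ w i).IsSwap ∧ (act ρ w (i + 1)).IsSwap ∧
        Disjoint (act ρ w i).support (act ρ w (i + 1)).support))}

/-- The subgroup `N(ρ)` generated by the colored-braid moves `𝓜` and `𝓟`. -/
def N (n : ℕ) {m : ℕ} (ρ : ℕ → Equiv.Perm (Fin m)) : Subgroup (BraidGroup n) :=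
  Subgroup.closure (NSet n ρ)

/-- The ordered product `β_a β_{a+1} ⋯ β_b` of braid generators. -/
def genProd (n a b : ℕ) : BraidGroup n :=
  ((List.range' a (b + 1 - a)).map (braidGen n)).prod

lemma act_braidGen {n i : ℕ} (h : i < n - 1) (ρ : ℕ → G) :
    act ρ (braidGen n i) = hFun i ρ := by
  simp only [act, braidGen, dif_pos h, braidActHom, PresentedGroup.toGroup.of]
  rfl

lemma act_inv_of_act_eq {n : ℕ} {σ ρ : ℕ → G} {w : BraidGroup n} (h : act σ w = ρ) :
    act ρ w⁻¹ = σ := by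
  rw [← h, ← act_mul, mul_inv_cancel, act_one]

lemma conj_sq_mem_N {n m i : ℕ} {ρ : ℕ → Perm (Fin m)} (hi : i < n - 1) (w : BraidGroup n)
    (hswap : (act ρ w i).IsSwap) (hswap' : (act ρ w (i + 1)).IsSwap)
    (hdisj : Disjoint (act ρ w i).support (act ρ w (i + 1)).support) :
    w * braidGen n i ^ 2 * w⁻¹ ∈ N n ρ :=
  Subgroup.subset_closure ⟨w, i, hi, Or.inr ⟨rfl, hswap, hswap', hdisj⟩⟩

def delta4Conjugator (n : ℕ) : BraidGroup n :=
  braidGen n 3 * braidGen n 2 * braidGen n 1 ^ 2 * braidGen n 2 * braidGen n 3 ^ 2 *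
    braidGen n 2 * braidGen n 1

lemma delta4_sq (n : ℕ) :
    delta4 n ^ 2 = (delta4Conjugator n)⁻¹ * braidGen n 4 ^ 2 * (delta4Conjugator n)⁻¹⁻¹ := by
  have hconj : delta4 n = (delta4Conjugator n)⁻¹ * braidGen n 4 * (delta4Conjugator n)⁻¹⁻¹ := by
    rw [inv_inv]
    rfl
  rw [hconj, conj_pow]

/-- The coloring `ρ_{5}⁶ · w⁻¹` for `w = delta4Conjugator 6`. Its entries `(2 3)`, `(1 4)` at
positions 4 and 5 are disjoint, so `δ₄² = w⁻¹ β₄² w` is a single move `𝓟`. -/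
def delta4BaseColoring : ℕ → Perm (Fin 4) := fun j =>
  if j < 4 then t12 else if j = 5 then t14 else t23

set_option maxRecDepth 4000 in
lemma act_delta4BaseColoring_delta4Conjugator :
    act delta4BaseColoring (delta4Conjugator 6) = rhoI {5} := by
  simp only [delta4Conjugator, pow_two, act_mul, act_braidGen (show 1 < 6 - 1 by norm_num),
    act_braidGen (show 2 < 6 - 1 by norm_num), act_braidGen (show 3 < 6 - 1 by norm_num)]
  funext j
  by_cases hj : j < 6
  · interval_cases j <;> decide
  · have hfar : j ≠ 1 ∧ j ≠ 2 ∧ j ≠ 3 ∧ j ≠ 4 ∧ j ≠ 5 ∧ ¬j < 2 ∧ ¬j < 4 := by omega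
    simp [hFun, rhoI, delta4BaseColoring, hfar]

/-- In `B₆`, `δ₄²` belongs to `N(ρ_{5}⁶)`: `δ₄` is equivalent to `δ₄⁻¹`
modulo the colored-braid moves for the coloring `ρ_{5}⁶ = ((1 2),(1 2),(2 3),(2 3),(2 3),(1 4))`. -/
theorem delta4_sq_mem_N :
    (delta4 6) ^ 2 ∈ N 6 (rhoI {5}) := by
  have hcolor := act_inv_of_act_eq act_delta4BaseColoring_delta4Conjugator
  rw [delta4_sq]
  apply conj_sq_mem_N (by norm_num) <;> rw [hcolor]
  · exact ⟨1, 2, by decide, rfl⟩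
  · exact ⟨0, 3, by decide, rfl⟩
  · decide

end ApostolakisMoves
end

section
/- (Bernstein–Edmonds) Fix integers m ≥ 2 and k ≥ 1. Call a sequence (σ_0, σ_1, …, σ_{2k−1}) of elements of S_m admissible if: (i) σ_0 σ_1 ⋯ σ_{2k−1} = id; (ii) every σ_i is a transposition; (iii) the subgroup of S_m generated by the σ_i is transitive; and (iv) σ_{2j} = σ_{2j+1} for every 0 ≤ j ≤ k−1. Consider the following two moves on admissible sequences: (a) for any two indices j ≠ j', interchange the pair (σ_{2j}, σ_{2j+1}) with the pair (σ_{2j'}, σ_{2j'+1}); (b) for indices j, j' with |j − j'| = 1, replace the pair (σ_{2j}, σ_{2j+1}) by (τ σ_{2j} τ^{-1}, τ σ_{2j+1} τ^{-1}), where τ = σ_{2j'}. Then any two admissible sequences (for the same m and k) can be transformed into one another by a finite sequence of moves of types (a) and (b). -/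
namespace BernsteinEdmonds

/-- A sequence `σ_0, …, σ_{2k-1}` of elements of `S_m` is *admissible* if the ordered product
is the identity, every entry is a transposition, the entries generate a transitive subgroup,
and the entries come in equal consecutive pairs `σ_{2j} = σ_{2j+1}`. -/
def Admissible (m k : ℕ) (σ : Fin (2 * k) → Equiv.Perm (Fin m)) : Prop :=
  (List.ofFn σ).prod = 1 ∧
  (∀ i, (σ i).IsSwap) ∧
  (∀ a b : Fin m, ∃ g ∈ Subgroup.closure (Set.range σ), g a = b) ∧
  (∀ j : ℕ, ∀ hj : j < k, σ ⟨2 * j, by omega⟩ = σ ⟨2 * j + 1, by omega⟩)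

/-- The Bernstein–Edmonds moves: (a) interchange two pairs `(σ_{2j}, σ_{2j+1})` and
`(σ_{2j'}, σ_{2j'+1})` with `j ≠ j'`; (b) for `|j - j'| = 1`, conjugate the pair
`(σ_{2j}, σ_{2j+1})` by `τ = σ_{2j'}`. -/
def BEMove (m k : ℕ) (σ σ' : Fin (2 * k) → Equiv.Perm (Fin m)) : Prop :=
  ∃ j j' : ℕ, ∃ hj : j < k, ∃ hj' : j' < k,
    (j ≠ j' ∧ σ' = fun i =>
      if i = (⟨2 * j, by omega⟩ : Fin (2 * k)) then σ ⟨2 * j', by omega⟩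
      else if i = (⟨2 * j + 1, by omega⟩ : Fin (2 * k)) then σ ⟨2 * j' + 1, by omega⟩
      else if i = (⟨2 * j', by omega⟩ : Fin (2 * k)) then σ ⟨2 * j, by omega⟩
      else if i = (⟨2 * j' + 1, by omega⟩ : Fin (2 * k)) then σ ⟨2 * j + 1, by omega⟩
      else σ i) ∨
    ((j = j' + 1 ∨ j' = j + 1) ∧ σ' = fun i =>
      if i = (⟨2 * j, by omega⟩ : Fin (2 * k)) then
        σ ⟨2 * j', by omega⟩ * σ ⟨2 * j, by omega⟩ * (σ ⟨2 * j', by omega⟩)⁻¹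
      else if i = (⟨2 * j + 1, by omega⟩ : Fin (2 * k)) then
        σ ⟨2 * j', by omega⟩ * σ ⟨2 * j + 1, by omega⟩ * (σ ⟨2 * j', by omega⟩)⁻¹
      else σ i)

open Equiv Function Relation

/-- Pair a length-`k` sequence into a length-`2k` sequence with equal consecutive pairs. -/
def P (m k : ℕ) (t : Fin k → Equiv.Perm (Fin m)) : Fin (2 * k) → Equiv.Perm (Fin m) :=
  fun i => t ⟨i.val / 2, by have := i.2; omega⟩

theorem P_apply (m k : ℕ) (t : Fin k → Equiv.Perm (Fin m)) (i : Fin (2*k)) (a : ℕ) (ha : a < k)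
    (h : i.val / 2 = a) : P m k t i = t ⟨a, ha⟩ := by
  unfold P; exact congrArg t (Fin.ext (by simpa using h))

/-- Moves on the half-length sequence: transposition of two entries, or conjugation of one
entry by another. -/
def TMove (m k : ℕ) (t t' : Fin k → Equiv.Perm (Fin m)) : Prop :=
  (∃ j j' : Fin k, j ≠ j' ∧ t' = t ∘ Equiv.swap j j') ∨
  (∃ j j' : Fin k, j ≠ j' ∧ t' = Function.update t j (t j' * t j * (t j')⁻¹))

def Good (m k : ℕ) (t : Fin k → Equiv.Perm (Fin m)) : Prop :=
  (∀ j, (t j).IsSwap) ∧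
  (∀ a b : Fin m, ∃ g ∈ Subgroup.closure (Set.range t), g a = b)


theorem bemove_swap (m k : ℕ) (t : Fin k → Equiv.Perm (Fin m)) (j j' : Fin k) (hne : j ≠ j') :
    BEMove m k (P m k t) (P m k (t ∘ Equiv.swap j j')) := by
  refine ⟨j.val, j'.val, j.2, j'.2, Or.inl ⟨by simpa [Fin.ext_iff] using hne, ?_⟩⟩
  funext i
  have hi2 := i.2
  by_cases h1 : i = (⟨2 * j.val, by omega⟩ : Fin (2*k))
  · rw [if_pos h1]
    have hv : i.val = 2 * j.val := by rw [h1]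
    rw [P_apply m k _ i j.val j.2 (by omega)]
    rw [P_apply m k t _ j'.val j'.2 (by simp only [Fin.val_mk]; omega)]
    simp only [Function.comp_apply]
    rw [show (⟨j.val, j.2⟩ : Fin k) = j from Fin.ext rfl, Equiv.swap_apply_left]
  rw [if_neg h1]
  by_cases h2 : i = (⟨2 * j.val + 1, by omega⟩ : Fin (2*k))
  · rw [if_pos h2]
    have hv : i.val = 2 * j.val + 1 := by rw [h2]
    rw [P_apply m k _ i j.val j.2 (by omega)]
    rw [P_apply m k t _ j'.val j'.2 (by simp only [Fin.val_mk]; omega)]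
    simp only [Function.comp_apply]
    rw [show (⟨j.val, j.2⟩ : Fin k) = j from Fin.ext rfl, Equiv.swap_apply_left]
  rw [if_neg h2]
  by_cases h3 : i = (⟨2 * j'.val, by omega⟩ : Fin (2*k))
  · rw [if_pos h3]
    have hv : i.val = 2 * j'.val := by rw [h3]
    rw [P_apply m k _ i j'.val j'.2 (by omega)]
    rw [P_apply m k t _ j.val j.2 (by simp only [Fin.val_mk]; omega)]
    simp only [Function.comp_apply]
    rw [show (⟨j'.val, j'.2⟩ : Fin k) = j' from Fin.ext rfl, Equiv.swap_apply_right]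
  rw [if_neg h3]
  by_cases h4 : i = (⟨2 * j'.val + 1, by omega⟩ : Fin (2*k))
  · rw [if_pos h4]
    have hv : i.val = 2 * j'.val + 1 := by rw [h4]
    rw [P_apply m k _ i j'.val j'.2 (by omega)]
    rw [P_apply m k t _ j.val j.2 (by simp only [Fin.val_mk]; omega)]
    simp only [Function.comp_apply]
    rw [show (⟨j'.val, j'.2⟩ : Fin k) = j' from Fin.ext rfl, Equiv.swap_apply_right]
  rw [if_neg h4]
  have hv1 : i.val ≠ 2 * j.val := fun h => h1 (Fin.ext h)
  have hv2 : i.val ≠ 2 * j.val + 1 := fun h => h2 (Fin.ext h)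
  have hv3 : i.val ≠ 2 * j'.val := fun h => h3 (Fin.ext h)
  have hv4 : i.val ≠ 2 * j'.val + 1 := fun h => h4 (Fin.ext h)
  rw [P_apply m k _ i (i.val / 2) (by omega) rfl, P_apply m k t i (i.val / 2) (by omega) rfl]
  simp only [Function.comp_apply]
  rw [Equiv.swap_apply_of_ne_of_ne (fun h => hv1 (by have := congrArg Fin.val h; simp at this; omega))
    (fun h => hv3 (by have := congrArg Fin.val h; simp at this; omega))]

theorem bemove_conj (m k : ℕ) (t : Fin k → Equiv.Perm (Fin m)) (j j' : Fin k)
    (hadj : j.val = j'.val + 1 ∨ j'.val = j.val + 1) :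
    BEMove m k (P m k t) (P m k (Function.update t j (t j' * t j * (t j')⁻¹))) := by
  refine ⟨j.val, j'.val, j.2, j'.2, Or.inr ⟨hadj, ?_⟩⟩
  funext i
  have hi2 := i.2
  have hjj : (⟨j.val, j.2⟩ : Fin k) = j := Fin.ext rfl
  by_cases h1 : i = (⟨2 * j.val, by omega⟩ : Fin (2*k))
  · rw [if_pos h1]
    have hv : i.val = 2 * j.val := by rw [h1]
    rw [P_apply m k _ i j.val j.2 (by omega)]
    rw [P_apply m k t _ j'.val j'.2 (by simp only [Fin.val_mk]; omega)]
    rw [P_apply m k t _ j.val j.2 (by simp only [Fin.val_mk]; omega)]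
    rw [hjj, Function.update_self]
  rw [if_neg h1]
  by_cases h2 : i = (⟨2 * j.val + 1, by omega⟩ : Fin (2*k))
  · rw [if_pos h2]
    have hv : i.val = 2 * j.val + 1 := by rw [h2]
    rw [P_apply m k _ i j.val j.2 (by omega)]
    rw [P_apply m k t _ j'.val j'.2 (by simp only [Fin.val_mk]; omega)]
    rw [P_apply m k t _ j.val j.2 (by simp only [Fin.val_mk]; omega)]
    rw [hjj, Function.update_self]
  rw [if_neg h2]
  have hv1 : i.val ≠ 2 * j.val := fun h => h1 (Fin.ext h)
  have hv2 : i.val ≠ 2 * j.val + 1 := fun h => h2 (Fin.ext h)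
  rw [P_apply m k _ i (i.val / 2) (by omega) rfl, P_apply m k t i (i.val / 2) (by omega) rfl]
  rw [Function.update_of_ne (fun h => hv1 (by have := congrArg Fin.val h; simp at this; omega))]

theorem conj_decomp {ι G : Type*} [DecidableEq ι] [Group G] (t : ι → G) (j p j' : ι)
    (hpj : p ≠ j) (hpj' : p ≠ j') (hjj' : j ≠ j') :
    (Function.update (t ∘ ⇑(Equiv.swap j p)) p
        ((t ∘ ⇑(Equiv.swap j p)) j' * (t ∘ ⇑(Equiv.swap j p)) p *
          ((t ∘ ⇑(Equiv.swap j p)) j')⁻¹)) ∘ ⇑(Equiv.swap j p)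
      = Function.update t j (t j' * t j * (t j')⁻¹) := by
  have hsj' : Equiv.swap j p j' = j' :=
    Equiv.swap_apply_of_ne_of_ne (Ne.symm hjj') (fun h => hpj' h.symm)
  funext i
  rw [Function.comp_apply]
  by_cases hij : i = j
  · rw [hij, Equiv.swap_apply_left, Function.update_self, Function.update_self]
    simp only [Function.comp_apply, hsj', Equiv.swap_apply_right]
  · by_cases hip : i = p
    · rw [hip, Equiv.swap_apply_right, Function.update_of_ne (Ne.symm hpj),
        Function.comp_apply, Equiv.swap_apply_left, Function.update_of_ne hpj]
    · rw [Equiv.swap_apply_of_ne_of_ne hij hip, Function.update_of_ne hip,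
        Function.comp_apply, Equiv.swap_apply_of_ne_of_ne hij hip, Function.update_of_ne hij]

theorem tmove_bemove {m k : ℕ} {t t' : Fin k → Equiv.Perm (Fin m)} (h : TMove m k t t') :
    Relation.ReflTransGen (BEMove m k) (P m k t) (P m k t') := by
  rcases h with ⟨j, j', hne, rfl⟩ | ⟨j, j', hne, rfl⟩
  · exact Relation.ReflTransGen.single (bemove_swap m k t j j' hne)
  · by_cases hadj : j.val = j'.val + 1 ∨ j'.val = j.val + 1
    · exact Relation.ReflTransGen.single (bemove_conj m k t j j' hadj)
    · -- pick p adjacent to j', with p ≠ j', p ≠ j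
      have hk2 : 2 ≤ k := by
        rcases Nat.lt_or_ge j.val j'.val with h | h
        · have := j'.2; omega
        · have h2 : j.val ≠ j'.val := fun hh => hne (Fin.ext hh)
          have := j.2; omega
      have hjv : j.val ≠ j'.val := fun hh => hne (Fin.ext hh)
      obtain ⟨p, hpj', hpj, hpadj⟩ :
          ∃ p : Fin k, p ≠ j' ∧ p ≠ j ∧ (p.val = j'.val + 1 ∨ j'.val = p.val + 1) := by
        by_cases hlt : j'.val + 1 < k
        · exact ⟨⟨j'.val + 1, hlt⟩, by simp [Fin.ext_iff], by simp [Fin.ext_iff]; omega,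
            Or.inl rfl⟩
        · have h1 : 1 ≤ j'.val := by have := j.2; omega
          exact ⟨⟨j'.val - 1, by omega⟩, by simp [Fin.ext_iff]; omega,
            by simp [Fin.ext_iff]; omega, Or.inr (by simp; omega)⟩
      have key := conj_decomp t j p j' hpj hpj' hne
      have s1 := Relation.ReflTransGen.single (bemove_swap m k t j p (Ne.symm hpj))
      have s2 := Relation.ReflTransGen.single
        (bemove_conj m k (t ∘ ⇑(Equiv.swap j p)) p j' hpadj)
      have s3 : Relation.ReflTransGen (BEMove m k)
          (P m k (Function.update (t ∘ ⇑(Equiv.swap j p)) p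
            ((t ∘ ⇑(Equiv.swap j p)) j' * (t ∘ ⇑(Equiv.swap j p)) p *
              ((t ∘ ⇑(Equiv.swap j p)) j')⁻¹)))
          (P m k (Function.update t j (t j' * t j * (t j')⁻¹))) := by
        rw [← key]
        exact Relation.ReflTransGen.single (bemove_swap m k _ j p (Ne.symm hpj))
      exact s1.trans (s2.trans s3)

theorem closure_update_conj {m k : ℕ} (t : Fin k → Equiv.Perm (Fin m)) (j j' : Fin k)
    (hne : j ≠ j') :
    Subgroup.closure (Set.range (Function.update t j (t j' * t j * (t j')⁻¹)))
      = Subgroup.closure (Set.range t) := by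
  set t' := Function.update t j (t j' * t j * (t j')⁻¹) with ht'
  have e' : t' j' = t j' := Function.update_of_ne (Ne.symm hne) _ _
  apply le_antisymm
  · rw [Subgroup.closure_le]
    rintro _ ⟨i, rfl⟩
    by_cases hij : i = j
    · rw [hij, ht', Function.update_self]
      exact mul_mem (mul_mem (Subgroup.subset_closure ⟨j', rfl⟩)
        (Subgroup.subset_closure ⟨j, rfl⟩)) (inv_mem (Subgroup.subset_closure ⟨j', rfl⟩))
    · rw [ht', Function.update_of_ne hij]
      exact Subgroup.subset_closure ⟨i, rfl⟩
  · rw [Subgroup.closure_le]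
    rintro _ ⟨i, rfl⟩
    by_cases hij : i = j
    · rw [hij]
      have hrw : t j = (t' j')⁻¹ * t' j * t' j' := by
        rw [e', ht', Function.update_self]; group
      rw [hrw]
      exact mul_mem (mul_mem (inv_mem (Subgroup.subset_closure ⟨j', rfl⟩))
        (Subgroup.subset_closure ⟨j, rfl⟩)) (Subgroup.subset_closure ⟨j', rfl⟩)
    · have : t i = t' i := (Function.update_of_ne hij _ _).symm
      rw [this]
      exact Subgroup.subset_closure ⟨i, rfl⟩

theorem good_tmove {m k : ℕ} {t t' : Fin k → Equiv.Perm (Fin m)} (hg : Good m k t)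
    (h : TMove m k t t') : Good m k t' := by
  obtain ⟨hsw, htr⟩ := hg
  rcases h with ⟨j, j', hne, rfl⟩ | ⟨j, j', hne, rfl⟩
  · constructor
    · intro i; exact hsw _
    · have : Set.range (t ∘ ⇑(Equiv.swap j j')) = Set.range t :=
        (Equiv.swap j j').surjective.range_comp t
      rw [this]; exact htr
  · constructor
    · intro i
      by_cases hij : i = j
      · rw [hij, Function.update_self]
        obtain ⟨x, y, hxy, hxyeq⟩ := hsw j
        exact ⟨t j' x, t j' y, (t j').injective.ne hxy,
          by rw [hxyeq, ← Equiv.swap_apply_apply]⟩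
      · rw [Function.update_of_ne hij]; exact hsw i
    · rw [closure_update_conj t j j' hne]; exact htr

theorem tmove_symm {m k : ℕ} {t t' : Fin k → Equiv.Perm (Fin m)}
    (hsw : ∀ j, (t j).IsSwap) (h : TMove m k t t') : TMove m k t' t := by
  rcases h with ⟨j, j', hne, rfl⟩ | ⟨j, j', hne, rfl⟩
  · refine Or.inl ⟨j, j', hne, ?_⟩
    funext i; simp [Equiv.swap_apply_self]
  · refine Or.inr ⟨j, j', hne, ?_⟩
    set t' := Function.update t j (t j' * t j * (t j')⁻¹) with ht'
    have e' : t' j' = t j' := Function.update_of_ne (Ne.symm hne) _ _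
    have hinv : (t j')⁻¹ = t j' := by
      obtain ⟨x, y, hxy, hxyeq⟩ := hsw j'
      rw [hxyeq, Equiv.swap_inv]
    have hgg : t j' * t j' = 1 := by
      obtain ⟨x, y, hxy, hxyeq⟩ := hsw j'
      rw [hxyeq, Equiv.swap_mul_self]
    funext i
    by_cases hij : i = j
    · rw [hij, Function.update_self, e', ht', Function.update_self, hinv]
      simp only [← mul_assoc]
      rw [hgg, one_mul, mul_assoc, hgg, mul_one]
    · rw [Function.update_of_ne hij, ht', Function.update_of_ne hij]

theorem good_path {m k : ℕ} {t t' : Fin k → Equiv.Perm (Fin m)} (hg : Good m k t)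
    (h : Relation.ReflTransGen (TMove m k) t t') : Good m k t' := by
  induction h with
  | refl => exact hg
  | tail _ hstep ih => exact good_tmove ih hstep

theorem path_symm {m k : ℕ} {t t' : Fin k → Equiv.Perm (Fin m)} (hg : Good m k t)
    (h : Relation.ReflTransGen (TMove m k) t t') :
    Relation.ReflTransGen (TMove m k) t' t := by
  induction h with
  | refl => exact Relation.ReflTransGen.refl
  | tail hpath hstep ih =>
      exact Relation.ReflTransGen.head (tmove_symm (good_path hg hpath).1 hstep) ih

theorem swap_struct {m : ℕ} {g : Equiv.Perm (Fin m)} (hg : g.IsSwap) {z : Fin m}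
    (h0 : g z ≠ z) : g = Equiv.swap z (g z) := by
  obtain ⟨x, y, hxy, rfl⟩ := hg
  by_cases hx : z = x
  · subst hx; rw [Equiv.swap_apply_left]
  · by_cases hy : z = y
    · subst hy; rw [Equiv.swap_apply_right, Equiv.swap_comm]
    · exact absurd (Equiv.swap_apply_of_ne_of_ne hx hy) h0

theorem mapsTo_closure {m : ℕ} {C : Set (Fin m)} {s : Set (Equiv.Perm (Fin m))}
    (hsw : ∀ g ∈ s, g.IsSwap) (hmt : ∀ g ∈ s, Set.MapsTo g C C) :
    ∀ g ∈ Subgroup.closure s, Set.MapsTo (⇑g) C C := by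
  intro g hgmem
  have main : ∀ g ∈ Subgroup.closure s, Set.MapsTo (⇑g) C C ∧ Set.MapsTo (⇑g⁻¹) C C := by
    intro g hgmem
    induction hgmem using Subgroup.closure_induction with
    | mem x hx =>
        refine ⟨hmt x hx, ?_⟩
        obtain ⟨a, b, hab, rfl⟩ := hsw x hx
        rw [Equiv.swap_inv]
        exact hmt _ hx
    | one => simp only [inv_one]; exact ⟨by simp [Set.MapsTo], by simp [Set.MapsTo]⟩
    | mul x y hx hy ihx ihy =>
        constructor
        · intro c hc
          exact ihx.1 (ihy.1 hc)
        · intro c hc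
          simp only [mul_inv_rev, Equiv.Perm.coe_mul, Function.comp_apply]
          exact ihy.2 (ihx.2 hc)
    | inv x hx ih => exact ⟨ih.2, by rw [inv_inv]; exact ih.1⟩
  exact (main g hgmem).1

theorem phase1_step {m k : ℕ} {t : Fin k → Equiv.Perm (Fin m)} (hg : Good m k t)
    (z : Fin m) (j₀ : Fin k) (h0 : t j₀ z = z) :
    ∃ j j' : Fin k, j ≠ j' ∧ t j z = z ∧ t j' z ≠ z ∧ t j (t j' z) ≠ t j' z := by
  by_contra hcon
  push_neg at hcon
  set C : Set (Fin m) := insert z (Set.range fun j => t j z) with hC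
  have hzC : z ∈ C := Set.mem_insert _ _
  have hmt : ∀ g ∈ Set.range t, Set.MapsTo g C C := by
    rintro _ ⟨j, rfl⟩ x hx
    by_cases hjz : t j z = z
    · rcases Set.mem_insert_iff.1 hx with rfl | ⟨j', hj'⟩
      · rw [hjz]; exact hzC
      · have hj'2 : t j' z = x := hj'
        rw [← hj'2]
        by_cases hj'z : t j' z = z
        · rw [hj'z, hjz]; exact hzC
        · have hne : j ≠ j' := fun h => hj'z (h ▸ hjz)
          rw [hcon j j' hne hjz hj'z]
          exact Set.mem_insert_iff.2 (Or.inr ⟨j', rfl⟩)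
    · have hstruct := swap_struct (hg.1 j) hjz
      rw [hstruct]
      by_cases hxz : x = z
      · subst hxz
        rw [Equiv.swap_apply_left]
        exact Set.mem_insert_iff.2 (Or.inr ⟨j, rfl⟩)
      · by_cases hxa : x = t j z
        · rw [hxa, Equiv.swap_apply_right]; exact hzC
        · rw [Equiv.swap_apply_of_ne_of_ne hxz hxa]; exact hx
  obtain ⟨a, b, hab, heq⟩ := hg.1 j₀
  have haz : a ≠ z := by
    rintro rfl
    rw [heq, Equiv.swap_apply_left] at h0
    exact hab h0.symm
  have hanotC : a ∉ C := by
    intro haC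
    have hfix : t j₀ a = a := by
      rcases Set.mem_insert_iff.1 haC with h | ⟨j', hj'⟩
      · exact absurd h haz
      · have hj'2 : t j' z = a := hj'
        have hj'z : t j' z ≠ z := fun h => haz (by rw [← hj'2, h])
        have hne : j₀ ≠ j' := fun h => hj'z (h ▸ h0)
        rw [← hj'2]
        exact hcon j₀ j' hne h0 hj'z
    rw [heq, Equiv.swap_apply_left] at hfix
    exact hab hfix.symm
  obtain ⟨g, hgmem, hgz⟩ := hg.2 z a
  exact hanotC (hgz ▸ mapsTo_closure (by rintro _ ⟨j, rfl⟩; exact hg.1 j) hmt g hgmem hzC)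

theorem phase1 {m k : ℕ} {t : Fin k → Equiv.Perm (Fin m)} (hg : Good m k t) (z : Fin m) :
    ∃ t', Relation.ReflTransGen (TMove m k) t t' ∧ Good m k t' ∧ ∀ j, t' j z ≠ z := by
  suffices h : ∀ n (t : Fin k → Equiv.Perm (Fin m)), Good m k t →
      (Finset.univ.filter fun j => t j z = z).card ≤ n →
      ∃ t', Relation.ReflTransGen (TMove m k) t t' ∧ Good m k t' ∧ ∀ j, t' j z ≠ z from
    h _ t hg le_rfl
  intro n
  induction n with
  | zero =>
      intro t hg hcard
      refine ⟨t, Relation.ReflTransGen.refl, hg, fun j hj => ?_⟩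
      have : j ∈ Finset.univ.filter fun j => t j z = z :=
        Finset.mem_filter.2 ⟨Finset.mem_univ _, hj⟩
      have := Finset.card_pos.2 ⟨j, this⟩
      omega
  | succ n ih =>
      intro t hg hcard
      by_cases hall : ∀ j, t j z ≠ z
      · exact ⟨t, Relation.ReflTransGen.refl, hg, hall⟩
      · push_neg at hall
        obtain ⟨j₀, h0⟩ := hall
        obtain ⟨j, j', hne, hjz, hj'z, hmoves⟩ := phase1_step hg z j₀ h0
        set t' := Function.update t j (t j' * t j * (t j')⁻¹) with ht'
        have hmove : TMove m k t t' := Or.inr ⟨j, j', hne, rfl⟩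
        have hgd' := good_tmove hg hmove
        have hj'new : t' j z ≠ z := by
          rw [ht', Function.update_self]
          set a := t j' z with ha
          have hstruct : t j' = Equiv.swap z a := swap_struct (hg.1 j') hj'z
          have hbz : t j a ≠ z := by
            intro h
            exact hj'z ((t j).injective (by rw [h, hjz]))
          simp only [Equiv.Perm.coe_mul, Function.comp_apply]
          rw [hstruct, Equiv.swap_inv, Equiv.swap_apply_left,
            Equiv.swap_apply_of_ne_of_ne hbz hmoves]
          exact hbz
        have hfe : (Finset.univ.filter fun i => t' i z = z)
            = (Finset.univ.filter fun i => t i z = z).erase j := by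
          ext i
          simp only [Finset.mem_filter, Finset.mem_univ, true_and, Finset.mem_erase]
          by_cases hij : i = j
          · subst hij
            constructor
            · intro h; exact absurd h hj'new
            · rintro ⟨h, -⟩; exact absurd rfl h
          · rw [show t' i = t i from Function.update_of_ne hij _ _]
            simp [hij]
        have hjmem : j ∈ Finset.univ.filter fun i => t i z = z :=
          Finset.mem_filter.2 ⟨Finset.mem_univ _, hjz⟩
        have hcard' : (Finset.univ.filter fun i => t' i z = z).card ≤ n := by
          rw [hfe, Finset.card_erase_of_mem hjmem]
          omega
        obtain ⟨t'', hpath, hgd'', hall''⟩ := ih t' hgd' hcard'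
        exact ⟨t'', Relation.ReflTransGen.head hmove hpath, hgd'', hall''⟩

theorem cover {m k : ℕ} {t : Fin k → Equiv.Perm (Fin m)} (hg : Good m k t) (z : Fin m)
    (hall : ∀ j, t j z ≠ z) : ∀ x : Fin m, x ≠ z → ∃ j, t j z = x := by
  intro x hx
  set C : Set (Fin m) := insert z (Set.range fun j => t j z) with hC
  have hmt : ∀ g ∈ Set.range t, Set.MapsTo g C C := by
    rintro _ ⟨j, rfl⟩ y hy
    have hstruct : t j = Equiv.swap z (t j z) := swap_struct (hg.1 j) (hall j)
    rw [hstruct]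
    by_cases hyz : y = z
    · subst hyz
      rw [Equiv.swap_apply_left]
      exact Set.mem_insert_iff.2 (Or.inr ⟨j, rfl⟩)
    · by_cases hya : y = t j z
      · rw [hya, Equiv.swap_apply_right]; exact Set.mem_insert _ _
      · rw [Equiv.swap_apply_of_ne_of_ne hyz hya]; exact hy
  obtain ⟨g, hgmem, hgz⟩ := hg.2 z x
  have hxC : x ∈ C :=
    hgz ▸ mapsTo_closure (by rintro _ ⟨j, rfl⟩; exact hg.1 j) hmt g hgmem (Set.mem_insert _ _)
  rcases Set.mem_insert_iff.1 hxC with h | ⟨j, hj⟩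
  · exact absurd h hx
  · exact ⟨j, hj⟩

theorem phase2 {m k : ℕ} {t : Fin k → Equiv.Perm (Fin m)} (hg : Good m k t) (z o : Fin m)
    (hzo : z ≠ o) (hall : ∀ j, t j z ≠ z) :
    ∃ t', Relation.ReflTransGen (TMove m k) t t' ∧ Good m k t' ∧ (∀ j, t' j z ≠ z) ∧
      (∀ j j', t' j z ≠ o → t' j z = t' j' z → j = j') := by
  suffices h : ∀ n (t : Fin k → Equiv.Perm (Fin m)), Good m k t → (∀ j, t j z ≠ z) →
      (Finset.univ.filter fun j => t j z ≠ o).card ≤ n →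
      ∃ t', Relation.ReflTransGen (TMove m k) t t' ∧ Good m k t' ∧ (∀ j, t' j z ≠ z) ∧
        (∀ j j', t' j z ≠ o → t' j z = t' j' z → j = j') from
    h _ t hg hall le_rfl
  intro n
  induction n with
  | zero =>
      intro t hg hall hcard
      refine ⟨t, Relation.ReflTransGen.refl, hg, hall, fun j j' hj _ => ?_⟩
      have : j ∈ Finset.univ.filter fun j => t j z ≠ o :=
        Finset.mem_filter.2 ⟨Finset.mem_univ _, hj⟩
      have := Finset.card_pos.2 ⟨j, this⟩
      omega
  | succ n ih =>
      intro t hg hall hcard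
      by_cases hinj : ∀ j j', t j z ≠ o → t j z = t j' z → j = j'
      · exact ⟨t, Relation.ReflTransGen.refl, hg, hall, hinj⟩
      · push_neg at hinj
        obtain ⟨j, j', hjo, hjj', hne⟩ := hinj
        obtain ⟨j₁, hj₁⟩ := cover hg z hall o (Ne.symm hzo)
        have hne1 : j ≠ j₁ := fun h => hjo (by rw [h, hj₁])
        have hne1' : j' ≠ j₁ := fun h => hjo (by rw [hjj', h, hj₁])
        set x := t j z with hx
        have hxz : x ≠ z := hall j
        have hstj : t j = Equiv.swap z x := swap_struct (hg.1 j) hxz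
        have hstj' : t j' = Equiv.swap z x := by
          have := swap_struct (hg.1 j') (hall j')
          rw [this, ← hjj']
        have hstj₁ : t j₁ = Equiv.swap z o := by
          have := swap_struct (hg.1 j₁) (hall j₁)
          rw [this, hj₁]
        set s1 := Function.update t j (t j₁ * t j * (t j₁)⁻¹) with hs1
        have hmove1 : TMove m k t s1 := Or.inr ⟨j, j₁, hne1, rfl⟩
        have hs1j : s1 j = Equiv.swap o x := by
          rw [hs1, Function.update_self, hstj, hstj₁, ← Equiv.swap_apply_apply,
            Equiv.swap_apply_left, Equiv.swap_apply_of_ne_of_ne hxz hjo]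
        have hs1j' : s1 j' = Equiv.swap z x := by
          rw [hs1, Function.update_of_ne (Ne.symm hne), hstj']
        set s2 := Function.update s1 j (s1 j' * s1 j * (s1 j')⁻¹) with hs2
        have hmove2 : TMove m k s1 s2 := Or.inr ⟨j, j', hne, rfl⟩
        have hs2eq : s2 = Function.update t j (Equiv.swap z o) := by
          rw [hs2, hs1j, hs1j', hs1, Function.update_idem]
          congr 1
          rw [← Equiv.swap_apply_apply, Equiv.swap_apply_of_ne_of_ne (Ne.symm hzo)
            (fun h => hjo h.symm), Equiv.swap_apply_right, Equiv.swap_comm]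
        set t' := Function.update t j (Equiv.swap z o) with ht'
        have hgd' : Good m k t' := by
          rw [← hs2eq]
          exact good_tmove (good_tmove hg hmove1) hmove2
        have hall' : ∀ i, t' i z ≠ z := by
          intro i
          by_cases hij : i = j
          · rw [hij, ht', Function.update_self, Equiv.swap_apply_left]
            exact Ne.symm hzo
          · rw [ht', Function.update_of_ne hij]
            exact hall i
        have hfe : (Finset.univ.filter fun i => t' i z ≠ o)
            = (Finset.univ.filter fun i => t i z ≠ o).erase j := by
          ext i
          simp only [Finset.mem_filter, Finset.mem_univ, true_and, Finset.mem_erase]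
          by_cases hij : i = j
          · subst hij
            rw [ht', Function.update_self, Equiv.swap_apply_left]
            simp
          · rw [ht', Function.update_of_ne hij]
            simp [hij]
        have hjmem : j ∈ Finset.univ.filter fun i => t i z ≠ o :=
          Finset.mem_filter.2 ⟨Finset.mem_univ _, hjo⟩
        have hcard' : (Finset.univ.filter fun i => t' i z ≠ o).card ≤ n := by
          rw [hfe, Finset.card_erase_of_mem hjmem]
          omega
        obtain ⟨t'', hpath, hgd'', hall'', hinj''⟩ := ih t' hgd' hall' hcard'
        refine ⟨t'', ?_, hgd'', hall'', hinj''⟩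
        exact Relation.ReflTransGen.head hmove1
          (Relation.ReflTransGen.head hmove2 (hs2eq ▸ hpath))

theorem perm_path {m k : ℕ} (t : Fin k → Equiv.Perm (Fin m)) (π : Equiv.Perm (Fin k)) :
    Relation.ReflTransGen (TMove m k) t (t ∘ ⇑π) := by
  revert t
  refine Equiv.Perm.swap_induction_on π ?_ ?_
  · intro t
    simpa using Relation.ReflTransGen.refl
  · intro f x y hxy ih t
    have h1 : TMove m k t (t ∘ ⇑(Equiv.swap x y)) := Or.inl ⟨x, y, hxy, rfl⟩
    have h2 := ih (t ∘ ⇑(Equiv.swap x y))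
    refine Relation.ReflTransGen.head h1 ?_
    have : (t ∘ ⇑(Equiv.swap x y)) ∘ ⇑f = t ∘ ⇑(Equiv.swap x y * f) := by
      funext i; simp [Equiv.Perm.coe_mul]
    rwa [this] at h2

theorem endstate_perm {m k : ℕ} {t s : Fin k → Equiv.Perm (Fin m)} (z o : Fin m) (hzo : z ≠ o)
    (hswt : ∀ j, (t j).IsSwap) (hallt : ∀ j, t j z ≠ z)
    (hinjt : ∀ j j', t j z ≠ o → t j z = t j' z → j = j')
    (hcovt : ∀ x : Fin m, x ≠ z → ∃ j, t j z = x)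
    (hsws : ∀ j, (s j).IsSwap) (halls : ∀ j, s j z ≠ z)
    (hinjs : ∀ j j', s j z ≠ o → s j z = s j' z → j = j')
    (hcovs : ∀ x : Fin m, x ≠ z → ∃ j, s j z = x) :
    ∃ π : Equiv.Perm (Fin k), t = s ∘ ⇑π := by
  have card_ne : ∀ (u : Fin k → Equiv.Perm (Fin m)), (∀ j, u j z ≠ z) →
      (∀ j j', u j z ≠ o → u j z = u j' z → j = j') → (∀ x : Fin m, x ≠ z → ∃ j, u j z = x) →
      Fintype.card {j : Fin k // ¬ u j z = o}
        = Fintype.card {x : Fin m // x ≠ z ∧ x ≠ o} := by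
    intro u hall hinj hcov
    refine Fintype.card_congr (Equiv.ofBijective
      (fun j => ⟨u j.1 z, hall j.1, j.2⟩) ⟨?_, ?_⟩)
    · rintro ⟨j, hj⟩ ⟨j', hj'⟩ h
      have : u j z = u j' z := congrArg Subtype.val h
      exact Subtype.ext (hinj j j' hj this)
    · rintro ⟨x, hxz, hxo⟩
      obtain ⟨j, hj⟩ := hcov x hxz
      exact ⟨⟨j, by rw [hj]; exact hxo⟩, Subtype.ext hj⟩
  have hcard : ∀ x : Fin m,
      Fintype.card {j : Fin k // t j z = x} = Fintype.card {j : Fin k // s j z = x} := by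
    intro x
    by_cases hxz : x = z
    · subst hxz
      rw [Fintype.card_eq_zero_iff.2 ⟨fun ⟨j, hj⟩ => hallt j hj⟩,
        Fintype.card_eq_zero_iff.2 ⟨fun ⟨j, hj⟩ => halls j hj⟩]
    · by_cases hxo : x = o
      · rw [hxo]
        have h1 : Fintype.card {j : Fin k // ¬ t j z = o} =
            Fintype.card {j : Fin k // ¬ s j z = o} := by
          rw [card_ne t hallt hinjt hcovt, card_ne s halls hinjs hcovs]
        have h2 := Fintype.card_subtype_compl (fun j : Fin k => t j z = o)
        have h3 := Fintype.card_subtype_compl (fun j : Fin k => s j z = o)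
        have h4 : Fintype.card {j : Fin k // t j z = o} ≤ Fintype.card (Fin k) :=
          Fintype.card_subtype_le _
        have h5 : Fintype.card {j : Fin k // s j z = o} ≤ Fintype.card (Fin k) :=
          Fintype.card_subtype_le _
        omega
      · obtain ⟨j, hj⟩ := hcovt x hxz
        obtain ⟨i, hi⟩ := hcovs x hxz
        rw [Fintype.card_eq_one_iff.2 ⟨⟨j, hj⟩, fun ⟨j', hj'⟩ => Subtype.ext
            (hinjt j' j (by rw [hj']; exact hxo) (by rw [hj', hj]))⟩,
          Fintype.card_eq_one_iff.2 ⟨⟨i, hi⟩, fun ⟨i', hi'⟩ => Subtype.ext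
            (hinjs i' i (by rw [hi']; exact hxo) (by rw [hi', hi]))⟩]
  let π : Fin k ≃ Fin k :=
    Equiv.ofFiberEquiv (f := fun j => t j z) (g := fun j => s j z)
      (fun x => Fintype.equivOfCardEq (hcard x))
  have hmap : ∀ j, s (π j) z = t j z := fun j =>
    Equiv.ofFiberEquiv_map (f := fun j => t j z) (g := fun j => s j z) _ j
  refine ⟨π, funext fun j => ?_⟩
  have h1 : t j = Equiv.swap z (t j z) := swap_struct (hswt j) (hallt j)
  have h2 : s (π j) = Equiv.swap z (s (π j) z) := swap_struct (hsws (π j)) (halls (π j))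
  rw [Function.comp_apply, h1, h2, hmap]

theorem good_connected {m k : ℕ} (hm : 2 ≤ m) {t s : Fin k → Equiv.Perm (Fin m)}
    (hgt : Good m k t) (hgs : Good m k s) :
    Relation.ReflTransGen (TMove m k) t s := by
  set z : Fin m := ⟨0, by omega⟩ with hz
  set o : Fin m := ⟨1, by omega⟩ with ho
  have hzo : z ≠ o := by simp [hz, ho, Fin.ext_iff]
  obtain ⟨t1, pt1, gt1, hallt1⟩ := phase1 hgt z
  obtain ⟨t2, pt2, gt2, hallt2, hinjt⟩ := phase2 gt1 z o hzo hallt1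
  obtain ⟨s1, ps1, gs1, halls1⟩ := phase1 hgs z
  obtain ⟨s2, ps2, gs2, halls2, hinjs⟩ := phase2 gs1 z o hzo halls1
  have hcovt := cover gt2 z hallt2
  have hcovs := cover gs2 z halls2
  obtain ⟨π, hπ⟩ := endstate_perm z o hzo gt2.1 hallt2 hinjt hcovt gs2.1 halls2 hinjs hcovs
  have p3 : Relation.ReflTransGen (TMove m k) s2 t2 := by
    rw [hπ]; exact perm_path s2 π
  have pst2 : Relation.ReflTransGen (TMove m k) s t2 := (ps1.trans ps2).trans p3
  exact (pt1.trans pt2).trans (path_symm hgs pst2)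

theorem tpath_bemove {m k : ℕ} {t s : Fin k → Equiv.Perm (Fin m)}
    (h : Relation.ReflTransGen (TMove m k) t s) :
    Relation.ReflTransGen (BEMove m k) (P m k t) (P m k s) := by
  induction h with
  | refl => exact Relation.ReflTransGen.refl
  | tail _ hstep ih => exact ih.trans (tmove_bemove hstep)

theorem range_P {m k : ℕ} (t : Fin k → Equiv.Perm (Fin m)) :
    Set.range (P m k t) = Set.range t := by
  apply Set.eq_of_subset_of_subset
  · rintro _ ⟨i, rfl⟩; exact ⟨_, rfl⟩
  · rintro _ ⟨j, rfl⟩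
    refine ⟨⟨2 * j.val, by have := j.2; omega⟩, ?_⟩
    exact (P_apply m k t _ j.val j.2 (by simp only [Fin.val_mk]; omega)).trans
      (congrArg t (Fin.ext rfl))

theorem pair_decomp {m k : ℕ} {σ : Fin (2 * k) → Equiv.Perm (Fin m)}
    (hpair : ∀ j : ℕ, ∀ hj : j < k, σ ⟨2 * j, by omega⟩ = σ ⟨2 * j + 1, by omega⟩) :
    σ = P m k (fun j : Fin k => σ ⟨2 * j.val, by have := j.2; omega⟩) := by
  funext i
  have hi := i.2
  rw [P_apply m k _ i (i.val / 2) (by omega) rfl]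
  by_cases h : i.val % 2 = 0
  · exact congrArg σ (Fin.ext (by simp only [Fin.val_mk]; omega))
  · have h2 := hpair (i.val / 2) (by omega)
    have h3 : i = ⟨2 * (i.val / 2) + 1, by omega⟩ := Fin.ext (by simp only [Fin.val_mk]; omega)
    exact (congrArg σ h3).trans h2.symm

/-- **Bernstein–Edmonds.** Any two admissible sequences (for the same `m ≥ 2`
and `k ≥ 1`) can be transformed into one another by a finite sequence of moves of types
(a) and (b). -/
theorem admissible_connected (m k : ℕ) (hm : 2 ≤ m) (hk : 1 ≤ k)
    (σ τ : Fin (2 * k) → Equiv.Perm (Fin m))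
    (hσ : Admissible m k σ) (hτ : Admissible m k τ) :
    Relation.ReflTransGen (BEMove m k) σ τ := by
  obtain ⟨-, hsw_σ, htr_σ, hpair_σ⟩ := hσ
  obtain ⟨-, hsw_τ, htr_τ, hpair_τ⟩ := hτ
  have hσP := pair_decomp hpair_σ
  have hτP := pair_decomp hpair_τ
  set tσ : Fin k → Equiv.Perm (Fin m) :=
    fun j : Fin k => σ ⟨2 * j.val, by have := j.2; omega⟩ with htσ
  set tτ : Fin k → Equiv.Perm (Fin m) :=
    fun j : Fin k => τ ⟨2 * j.val, by have := j.2; omega⟩ with htτ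
  have hrσ : Set.range σ = Set.range tσ := by
    conv_lhs => rw [hσP]
    rw [range_P]
  have hrτ : Set.range τ = Set.range tτ := by
    conv_lhs => rw [hτP]
    rw [range_P]
  have hgσ : Good m k tσ := ⟨fun j => hsw_σ _, by rw [← hrσ]; exact htr_σ⟩
  have hgτ : Good m k tτ := ⟨fun j => hsw_τ _, by rw [← hrτ]; exact htr_τ⟩
  have hpath := tpath_bemove (good_connected hm hgσ hgτ)
  rwa [← hσP, ← hτP] at hpath

end BernsteinEdmonds
end
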